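/- For every initial radius R₀ > 0, every target radius R_T > 0 and every final time T > 0, there exist a continuously differentiable function R : [0,T] → (0,∞) with R(0) = R₀ and R(T) = R_T, a continuous function u_m : [0,T] → ℝ, and a function u : [0,T] × ℝ² → ℝ such that the pair (u, R) follows the one-phase Stefan dynamics with melting temperature u_m. In other words, there exists a temperature trajectory u_m(t) that transforms, through the Stefan dynamics, the initial disk of radius R₀ into a disk of radius R_T at time T. -/

import Mathlib

open Set

/-- The spatial Laplacian of `u : ℝ² → ℝ` at `x`: the trace of the Hessian,
computed in the standard orthonormal basis of `EuclideanSpace ℝ (Fin 2)`. -/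
noncomputable def laplacian (u : EuclideanSpace ℝ (Fin 2) → ℝ)
    (x : EuclideanSpace ℝ (Fin 2)) : ℝ :=
  ∑ i : Fin 2,
    fderiv ℝ (fun y => fderiv ℝ u y (EuclideanSpace.basisFun (Fin 2) ℝ i)) x
      (EuclideanSpace.basisFun (Fin 2) ℝ i)

/-- The pair `(u, R)` follows the one-phase Stefan dynamics with melting temperature
`u_m` on the time interval `[0, T]`, on the moving-disk tube
`{(t, x) : 0 < t < T, ‖x‖ < R t}`: `u` admits the required time derivative and spatial
second derivatives at each point of the tube, and
(i) the heat equation `∂ₜu = Δu` holds in the tube,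
(ii) `u(t, x) = u_m(t)` on the lateral boundary `‖x‖ = R t`,
(iii) the Stefan condition `R'(t) = -⟨∇u(t,x), x/‖x‖⟩` holds on the lateral boundary. -/
def FollowsStefanDynamics (T : ℝ) (u : ℝ → EuclideanSpace ℝ (Fin 2) → ℝ)
    (R : ℝ → ℝ) (u_m : ℝ → ℝ) : Prop :=
  (∀ t ∈ Ioo (0 : ℝ) T, ∀ x : EuclideanSpace ℝ (Fin 2), ‖x‖ < R t →
    DifferentiableAt ℝ (fun s => u s x) t ∧
    DifferentiableAt ℝ (u t) x ∧
    DifferentiableAt ℝ (fun y => fderiv ℝ (u t) y) x) ∧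
  (∀ t ∈ Ioo (0 : ℝ) T, ∀ x : EuclideanSpace ℝ (Fin 2), ‖x‖ < R t →
    deriv (fun s => u s x) t = laplacian (u t) x) ∧
  (∀ t ∈ Icc (0 : ℝ) T, ∀ x : EuclideanSpace ℝ (Fin 2), ‖x‖ = R t →
    u t x = u_m t) ∧
  (∀ t ∈ Ioo (0 : ℝ) T, ∀ x : EuclideanSpace ℝ (Fin 2), ‖x‖ = R t →
    deriv R t = -(inner ℝ (gradient (u t) x) ((‖x‖)⁻¹ • x) : ℝ))

/-! An explicit self-similar solution works: `u(t, x) = 4bt + b‖x‖²`, `R(t) = R₀ e^{-2bt}`.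
Then `∂ₜu = 4b = Δu` in dimension two, and on the circle `‖x‖ = R(t)` the outward normal derivative
of `u` is `2bR(t) = -R'(t)`. The rate `b = log (R₀ / R_T) / (2T)` makes `R(T) = R_T`. -/

section QuadraticProfile

variable {E : Type*} [NormedAddCommGroup E] [InnerProductSpace ℝ E]

theorem hasFDerivAt_const_add_mul_norm_sq (c b : ℝ) (x : E) :
    HasFDerivAt (fun y : E => c + b * ‖y‖ ^ 2) ((2 * b) • innerSL ℝ x) x := by
  refine (((hasStrictFDerivAt_norm_sq x).hasFDerivAt.const_mul b).const_add c).congr_fderiv ?_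
  ext v
  simp
  ring

theorem fderiv_const_add_mul_norm_sq (c b : ℝ) :
    fderiv ℝ (fun y : E => c + b * ‖y‖ ^ 2) = fun x => (2 * b) • innerSL ℝ x :=
  funext fun x => (hasFDerivAt_const_add_mul_norm_sq c b x).fderiv

theorem differentiable_fderiv_const_add_mul_norm_sq (c b : ℝ) :
    Differentiable ℝ (fderiv ℝ (fun y : E => c + b * ‖y‖ ^ 2)) := by
  rw [fderiv_const_add_mul_norm_sq]
  exact (innerSL ℝ).differentiable.const_smul (2 * b)

theorem fderiv_fderiv_const_add_mul_norm_sq_apply (c b : ℝ) (x v w : E) :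
    fderiv ℝ (fun y => fderiv ℝ (fun y : E => c + b * ‖y‖ ^ 2) y v) x w = 2 * b * inner ℝ w v := by
  have hlin : (fun y => fderiv ℝ (fun y : E => c + b * ‖y‖ ^ 2) y v)
      = ⇑((2 * b) • innerSL ℝ v) := by
    ext y
    rw [fderiv_const_add_mul_norm_sq]
    simp [real_inner_comm]
  rw [hlin, ContinuousLinearMap.fderiv]
  simp [real_inner_comm]

theorem inner_gradient_const_add_mul_norm_sq_inv_norm_smul [CompleteSpace E] (c b : ℝ) (x : E) :
    inner ℝ (gradient (fun y : E => c + b * ‖y‖ ^ 2) x) ((‖x‖)⁻¹ • x) = 2 * b * ‖x‖ := by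
  rw [inner_gradient_left, fderiv_const_add_mul_norm_sq]
  rcases eq_or_ne ‖x‖ 0 with hx | hx
  · simp [norm_eq_zero.mp hx]
  · simp only [FunLike.coe_smul, Pi.smul_apply, innerSL_apply_apply, smul_eq_mul,
      real_inner_smul_right, real_inner_self_eq_norm_sq]
    field_simp

end QuadraticProfile

theorem laplacian_const_add_mul_norm_sq (c b : ℝ) (x : EuclideanSpace ℝ (Fin 2)) :
    laplacian (fun y => c + b * ‖y‖ ^ 2) x = 4 * b := by
  simp only [laplacian, fderiv_fderiv_const_add_mul_norm_sq_apply, real_inner_self_eq_norm_sq,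
    (EuclideanSpace.basisFun (Fin 2) ℝ).orthonormal.1, Fin.sum_univ_two]
  ring

theorem followsStefanDynamics_selfSimilar (T R₀ b : ℝ) :
    FollowsStefanDynamics T (fun t x => 4 * b * t + b * ‖x‖ ^ 2)
      (fun t => R₀ * Real.exp (-(2 * b) * t))
      (fun t => 4 * b * t + b * (R₀ * Real.exp (-(2 * b) * t)) ^ 2) := by
  have hR : ∀ t, deriv (fun t => R₀ * Real.exp (-(2 * b) * t)) t
      = -(2 * b) * (R₀ * Real.exp (-(2 * b) * t)) := fun t => by
    rw [(((hasDerivAt_id' t).const_mul (-(2 * b))).exp.const_mul R₀).deriv]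
    ring
  have hu : ∀ (x : EuclideanSpace ℝ (Fin 2)) t,
      deriv (fun s => 4 * b * s + b * ‖x‖ ^ 2) t = 4 * b := fun x t => by
    simp
  refine ⟨fun t _ x _ => ⟨by fun_prop, ?_, ?_⟩, fun t _ x _ => ?_, fun t _ x hx => ?_,
    fun t _ x hx => ?_⟩
  · exact (hasFDerivAt_const_add_mul_norm_sq _ b x).differentiableAt
  · exact (differentiable_fderiv_const_add_mul_norm_sq _ b).differentiableAt
  · rw [hu, laplacian_const_add_mul_norm_sq]
  · beta_reduce at hx ⊢
    rw [hx]
  · beta_reduce at hx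
    rw [hR, inner_gradient_const_add_mul_norm_sq_inv_norm_smul, hx]
    ring

theorem mul_exp_log_div_eq (R₀ R_T T : ℝ) (hR₀ : 0 < R₀) (hRT : 0 < R_T) (hT : 0 < T) :
    R₀ * Real.exp (-(2 * (Real.log (R₀ / R_T) / (2 * T))) * T) = R_T := by
  have hexponent : -(2 * (Real.log (R₀ / R_T) / (2 * T))) * T = Real.log (R_T / R₀) := by
    rw [← inv_div R_T R₀, Real.log_inv]
    field_simp
  rw [hexponent, Real.exp_log (div_pos hRT hR₀)]
  field_simp

/-- For any initial radius `R₀ > 0`, target radius `R_T > 0` and final time `T > 0`,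
there exists a melting-temperature trajectory `u_m` transforming, through the Stefan
dynamics, the disk of radius `R₀` at time `0` into the disk of radius `R_T` at time `T`. -/
theorem stefan_disk_to_disk (R₀ R_T T : ℝ) (hR₀ : 0 < R₀) (hRT : 0 < R_T) (hT : 0 < T) :
    ∃ (R : ℝ → ℝ) (u_m : ℝ → ℝ) (u : ℝ → EuclideanSpace ℝ (Fin 2) → ℝ),
      ContDiffOn ℝ 1 R (Icc 0 T) ∧
      (∀ t ∈ Icc (0 : ℝ) T, 0 < R t) ∧
      R 0 = R₀ ∧ R T = R_T ∧
      ContinuousOn u_m (Icc 0 T) ∧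
      FollowsStefanDynamics T u R u_m := by
  set b := Real.log (R₀ / R_T) / (2 * T)
  refine ⟨_, _, _, ?_, fun t _ => by positivity, by simp, mul_exp_log_div_eq R₀ R_T T hR₀ hRT hT,
    ?_, followsStefanDynamics_selfSimilar T R₀ b⟩
  · exact ContDiff.contDiffOn (by fun_prop)
  · exact Continuous.continuousOn (by fun_prop)
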